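/- The infinite series ∑_{k=0}^∞ (2k)!·(3k+2)/(4k+3)!! converges to π/4. -/

import Mathlib

/-!
Put `r(x) = 2x(1 - x)`. The Beta integral gives `∫₀¹ rⁿ = 2ⁿ n!² / (2n + 1)!`, so summing
the geometric series under the integral sign yields Euler's series
`∑ 2ⁿ n!² / (2n + 1)! = ∫₀¹ dx / (1 - r) = π / 2` (an arctangent), with a remainder of
size `O(2⁻ᴺ)` because `r ≤ 1/2`. Since `(4k + 3)‼ = (4k + 3)! / (2^(2k+1) (2k + 1)!)`, the
`k`-th term of the given series is the average of the terms `2k` and `2k + 1` of Euler's series.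
-/

open Filter Finset Real intervalIntegral Topology
open MeasureTheory (volume)
open scoped Nat

theorem integral_pow_mul_one_sub_pow_succ (a b : ℕ) :
    ∫ x in (0 : ℝ)..1, x ^ a * (1 - x) ^ (b + 1)
      = (b + 1) / (a + 1) * ∫ x in (0 : ℝ)..1, x ^ (a + 1) * (1 - x) ^ b := by
  have hu : ∀ x ∈ Set.uIcc (0 : ℝ) 1,
      HasDerivAt (fun x : ℝ => (1 - x) ^ (b + 1)) (-((b + 1) * (1 - x) ^ b)) x := by
    intro x _
    simpa using ((hasDerivAt_id x).const_sub 1).fun_pow (b + 1)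
  have hv : ∀ x ∈ Set.uIcc (0 : ℝ) 1,
      HasDerivAt (fun x : ℝ => x ^ (a + 1) / (a + 1)) (x ^ a) x := by
    intro x _
    refine ((hasDerivAt_pow (a + 1) x).div_const _).congr_deriv ?_
    push_cast
    field_simp
  have hparts := integral_mul_deriv_eq_deriv_mul hu hv
    (by apply Continuous.intervalIntegrable; fun_prop)
    (by apply Continuous.intervalIntegrable; fun_prop)
  rw [← integral_const_mul]
  simp only [mul_comm (_ ^ a)] at hparts ⊢
  rw [hparts]
  simp only [sub_self, sub_zero, one_pow, zero_pow (Nat.succ_ne_zero _), zero_div, zero_mul,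
    mul_zero, zero_sub, ← integral_neg]
  congr 1
  ext x
  field_simp

theorem integral_pow_mul_one_sub_pow (a b : ℕ) :
    ∫ x in (0 : ℝ)..1, x ^ a * (1 - x) ^ b = (a ! * b ! : ℝ) / (a + b + 1)! := by
  induction b generalizing a with
  | zero => simp [Nat.factorial_succ]; field_simp
  | succ b ih =>
    rw [integral_pow_mul_one_sub_pow_succ, ih, show a + (b + 1) + 1 = a + 1 + b + 1 by ring]
    push_cast [Nat.factorial_succ]
    field_simp

theorem Finset.sum_range_two_mul {M : Type*} [AddCommMonoid M] (f : ℕ → M) (N : ℕ) :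
    ∑ n ∈ range (2 * N), f n = ∑ k ∈ range N, (f (2 * k) + f (2 * k + 1)) := by
  induction N with
  | zero => simp
  | succ N ih => rw [mul_add_one, sum_range_succ, sum_range_succ, sum_range_succ, ih, add_assoc]

theorem Nat.doubleFactorial_two_mul_add_one_mul (n : ℕ) :
    (2 * n + 1)‼ * (2 ^ n * n !) = (2 * n + 1)! := by
  rw [Nat.factorial_eq_mul_doubleFactorial, Nat.doubleFactorial_two_mul]

noncomputable def eulerTerm (n : ℕ) : ℝ := 2 ^ n * (n ! : ℝ) ^ 2 / (2 * n + 1)!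

theorem integral_two_mul_mul_one_sub_pow (n : ℕ) :
    ∫ x in (0 : ℝ)..1, (2 * x * (1 - x)) ^ n = eulerTerm n := by
  simp_rw [mul_assoc, mul_pow]
  rw [integral_const_mul, integral_pow_mul_one_sub_pow, eulerTerm, ← two_mul]
  ring

theorem two_mul_mul_one_sub_le (x : ℝ) : 2 * x * (1 - x) ≤ 1 / 2 := by
  nlinarith [sq_nonneg (2 * x - 1)]

theorem integral_one_div_one_sub_two_mul_mul_one_sub :
    ∫ x in (0 : ℝ)..1, 1 / (1 - 2 * x * (1 - x)) = π / 2 := by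
  have hderiv : ∀ x ∈ Set.uIcc (0 : ℝ) 1,
      HasDerivAt (fun x => arctan (2 * x - 1)) (1 / (1 - 2 * x * (1 - x))) x := by
    intro x _
    have hpos : 0 < 1 - 2 * x * (1 - x) := by linarith [two_mul_mul_one_sub_le x]
    refine ((((hasDerivAt_id x).const_mul 2).sub_const 1).arctan).congr_deriv ?_
    simp only [id]
    field_simp
    ring
  rw [integral_eq_sub_of_hasDerivAt hderiv]
  · norm_num [arctan_one, arctan_neg]
    ring
  · refine Continuous.intervalIntegrable (continuous_const.div (by fun_prop) fun x => ?_) _ _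
    linarith [two_mul_mul_one_sub_le x]

noncomputable def eulerRemainder (N : ℕ) : ℝ :=
  ∫ x in (0 : ℝ)..1, (2 * x * (1 - x)) ^ N / (1 - 2 * x * (1 - x))

theorem sum_range_eulerTerm (N : ℕ) :
    ∑ n ∈ range N, eulerTerm n = π / 2 - eulerRemainder N := by
  have hne (x : ℝ) : 1 - 2 * x * (1 - x) ≠ 0 := by linarith [two_mul_mul_one_sub_le x]
  have hgeom (x : ℝ) : ∑ n ∈ range N, (2 * x * (1 - x)) ^ n
      = 1 / (1 - 2 * x * (1 - x)) - (2 * x * (1 - x)) ^ N / (1 - 2 * x * (1 - x)) := by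
    rw [geom_sum_eq (fun h => hne x (by rw [h, sub_self])), div_sub_div_same,
      ← neg_div_neg_eq, neg_sub, neg_sub]
  have hcont : Continuous fun x : ℝ => 1 - 2 * x * (1 - x) := by fun_prop
  have hint₁ : IntervalIntegrable (fun x : ℝ => 1 / (1 - 2 * x * (1 - x))) volume 0 1 :=
    (continuous_const.div hcont hne).intervalIntegrable _ _
  have hint₂ : IntervalIntegrable
      (fun x : ℝ => (2 * x * (1 - x)) ^ N / (1 - 2 * x * (1 - x))) volume 0 1 :=
    ((by fun_prop : Continuous fun x : ℝ => (2 * x * (1 - x)) ^ N).div hcont hne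
      |>.intervalIntegrable _ _)
  simp_rw [← integral_two_mul_mul_one_sub_pow]
  rw [← integral_finsetSum fun n _ => (by fun_prop : Continuous _).intervalIntegrable _ _]
  simp_rw [hgeom]
  rw [integral_sub hint₁ hint₂, integral_one_div_one_sub_two_mul_mul_one_sub, eulerRemainder]

theorem norm_eulerRemainder_le (N : ℕ) : ‖eulerRemainder N‖ ≤ 2 * (1 / 2) ^ N := by
  refine (norm_integral_le_of_norm_le_const (C := 2 * (1 / 2) ^ N) fun x hx => ?_).trans_eq
    (by simp)
  rw [Set.uIoc_of_le zero_le_one] at hx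
  have hr₀ : 0 ≤ 2 * x * (1 - x) := by nlinarith [hx.1, hx.2]
  have hr₁ := two_mul_mul_one_sub_le x
  rw [norm_of_nonneg (div_nonneg (pow_nonneg hr₀ N) (by linarith))]
  calc (2 * x * (1 - x)) ^ N / (1 - 2 * x * (1 - x)) ≤ (1 / 2) ^ N / (1 / 2) :=
        div_le_div₀ (by positivity) (pow_le_pow_left₀ hr₀ hr₁ N) (by norm_num) (by linarith)
    _ = 2 * (1 / 2) ^ N := by ring

theorem hasSum_eulerTerm : HasSum eulerTerm (π / 2) := by
  refine (hasSum_iff_tendsto_nat_of_nonneg (fun n => by unfold eulerTerm; positivity) _).2 ?_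
  simp_rw [sum_range_eulerTerm]
  have hrem : Tendsto eulerRemainder atTop (𝓝 0) := by
    refine squeeze_zero_norm norm_eulerRemainder_le ?_
    simpa using (tendsto_pow_atTop_nhds_zero_of_lt_one (r := (1 / 2 : ℝ))
      (by norm_num) (by norm_num)).const_mul 2
  simpa using tendsto_const_nhds.sub hrem

theorem factorial_mul_div_doubleFactorial_eq_eulerTerm (k : ℕ) :
    (2 * k)! * (3 * k + 2 : ℝ) / (4 * k + 3)‼
      = (eulerTerm (2 * k) + eulerTerm (2 * k + 1)) / 2 := by
  have hdf : ((4 * k + 3)‼ : ℝ) = (4 * k + 3)! / (2 ^ (2 * k + 1) * (2 * k + 1)!) := by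
    have h := Nat.doubleFactorial_two_mul_add_one_mul (2 * k + 1)
    rw [show 2 * (2 * k + 1) + 1 = 4 * k + 3 by ring] at h
    rw [eq_div_iff (by positivity)]
    exact_mod_cast h
  rw [hdf, eulerTerm, eulerTerm, show 2 * (2 * k) + 1 = 4 * k + 1 by ring,
    show 2 * (2 * k + 1) + 1 = 4 * k + 1 + 1 + 1 by ring,
    show 4 * k + 3 = 4 * k + 1 + 1 + 1 by ring]
  push_cast [Nat.factorial_succ]
  field_simp
  ring

theorem stmt5 :
    Tendsto (fun N => ∑ k ∈ range N,
      (Nat.factorial (2 * k) : ℝ) * (3 * (k : ℝ) + 2) /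
        (Nat.doubleFactorial (4 * k + 3) : ℝ))
      atTop (nhds (Real.pi / 4)) := by
  have hpartial (N : ℕ) : ∑ k ∈ range N, ((2 * k)! : ℝ) * (3 * k + 2) / (4 * k + 3)‼
      = (∑ n ∈ range (2 * N), eulerTerm n) / 2 := by
    rw [sum_range_two_mul, sum_div]
    exact sum_congr rfl fun k _ => factorial_mul_div_doubleFactorial_eq_eulerTerm k
  have hlim := (hasSum_eulerTerm.tendsto_sum_nat.comp
    (tendsto_id.const_mul_atTop' two_pos)).div_const 2
  rw [show π / 2 / 2 = π / 4 by ring] at hlim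
  simpa only [hpartial, Function.comp_def, id] using hlim
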